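/- arXiv:2305.08748 — 3 statements merged into one kernel-verified Lean document; each statement's English description precedes it below -/
import Mathlib

section
/- Let G be a group, ρ : G → SL₂(ℤ) a group homomorphism, and w : G → ℤ² a ρ-cocycle. Assume that for every nonzero v ∈ ℤ² there exists g ∈ G such that ρ(g)·v and v are ℤ-linearly independent. Let H be a normal subgroup of G with H ⊆ ker ρ. Then the image w(H) = {w(h) : h ∈ H} is an additive subgroup of ℤ² which is either trivial or contains two ℤ-linearly independent vectors; in particular w(H) is never an infinite cyclic group. -/
/-- Two vectors of `ℤ²` are `ℤ`-linearly independent. -/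
def ZIndep (v w : Fin 2 → ℤ) : Prop :=
  ∀ a b : ℤ, a • v + b • w = 0 → a = 0 ∧ b = 0

/-- If `ρ : G → SL₂(ℤ)` is such that for every nonzero `v ∈ ℤ²` some `ρ(g)·v` is
independent from `v`, `w` is a `ρ`-cocycle, and `H ⊴ G` is contained in `ker ρ`, then
`w(H)` is an additive subgroup of `ℤ²` which is either trivial or contains two
`ℤ`-linearly independent vectors. -/
theorem cocycle_image_of_normal_subgroup_trivial_or_rank_two
    {G : Type*} [Group G] (ρ : G →* Matrix.SpecialLinearGroup (Fin 2) ℤ)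
    (w : G → Fin 2 → ℤ)
    (hw : ∀ g h : G, w (g * h) = w g + (ρ g : Matrix (Fin 2) (Fin 2) ℤ).mulVec (w h))
    (hirr : ∀ v : Fin 2 → ℤ, v ≠ 0 →
      ∃ g : G, ZIndep ((ρ g : Matrix (Fin 2) (Fin 2) ℤ).mulVec v) v)
    (H : Subgroup G) [H.Normal] (hH : H ≤ ρ.ker) :
    ∃ S : AddSubgroup (Fin 2 → ℤ), (S : Set (Fin 2 → ℤ)) = w '' (H : Set G) ∧
      (S = ⊥ ∨ ∃ v₁ ∈ S, ∃ v₂ ∈ S, ZIndep v₁ v₂) := by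
  -- ρ is trivial on H
  have hρ1 : ∀ h ∈ H, (ρ h : Matrix (Fin 2) (Fin 2) ℤ) = 1 := by
    intro h hh
    have : ρ h = 1 := MonoidHom.mem_ker.mp (hH hh)
    rw [this]; rfl
  -- w 1 = 0
  have w1 : w 1 = 0 := by
    have := hw 1 1
    rw [map_one] at this
    simp only [mul_one, Matrix.SpecialLinearGroup.coe_one, Matrix.one_mulVec] at this
    have : w 1 + w 1 = w 1 + 0 := by rw [add_zero]; exact this.symm
    exact (add_left_cancel this)
  -- additivity on H (only need ρ trivial on first argument)
  have wadd : ∀ h g : G, h ∈ H → w (h * g) = w h + w g := by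
    intro h g hh
    rw [hw h g, hρ1 h hh, Matrix.one_mulVec]
  -- inverse
  have winv : ∀ h ∈ H, w h⁻¹ = -w h := by
    intro h hh
    have := hw h h⁻¹
    rw [mul_inv_cancel, w1, hρ1 h hh, Matrix.one_mulVec] at this
    rw [eq_neg_iff_add_eq_zero, add_comm]
    exact this.symm
  -- conjugation: ρ g * w h = w (g h g⁻¹)
  have wconj : ∀ g : G, ∀ h ∈ H,
      (ρ g : Matrix (Fin 2) (Fin 2) ℤ).mulVec (w h) = w (g * h * g⁻¹) := by
    intro g h hh
    have h1 : w (g * h * g⁻¹) = w g + (ρ g : Matrix (Fin 2) (Fin 2) ℤ).mulVec (w (h * g⁻¹)) := by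
      rw [mul_assoc]; exact hw g (h * g⁻¹)
    have h2 : w (h * g⁻¹) = w h + w g⁻¹ := wadd h g⁻¹ hh
    have h3 : w g + (ρ g : Matrix (Fin 2) (Fin 2) ℤ).mulVec (w g⁻¹) = 0 := by
      have := hw g g⁻¹
      rw [mul_inv_cancel, w1] at this
      exact this.symm
    rw [h1, h2, Matrix.mulVec_add, add_left_comm, h3, add_zero]
  refine ⟨{ carrier := w '' (H : Set G)
            zero_mem' := ⟨1, H.one_mem, w1⟩
            add_mem' := ?_
            neg_mem' := ?_ }, rfl, ?_⟩
  · rintro a b ⟨x, hx, rfl⟩ ⟨y, hy, rfl⟩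
    exact ⟨x * y, H.mul_mem hx hy, wadd x y hx⟩
  · rintro a ⟨x, hx, rfl⟩
    exact ⟨x⁻¹, H.inv_mem hx, winv x hx⟩
  · by_cases htriv : ∀ h ∈ H, w h = 0
    · left
      ext v
      simp only [AddSubgroup.mem_mk, Set.mem_image, AddSubgroup.mem_bot]
      constructor
      · rintro ⟨x, hx, rfl⟩; exact htriv x hx
      · rintro rfl; exact ⟨1, H.one_mem, w1⟩
    · right
      push_neg at htriv
      obtain ⟨h, hh, hwh⟩ := htriv
      obtain ⟨g, hg⟩ := hirr (w h) hwh
      refine ⟨(ρ g : Matrix (Fin 2) (Fin 2) ℤ).mulVec (w h), ?_, w h, ⟨h, hh, rfl⟩, hg⟩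
      rw [wconj g h hh]
      exact ⟨g * h * g⁻¹, Subgroup.Normal.conj_mem ‹H.Normal› h hh g, rfl⟩
end

section
/- Let G be a group, ρ : G → SL₂(ℤ) a group homomorphism, and w₁, w₂ : G → ℤ² two ρ-cocycles. Assume: (i) for every nonzero v ∈ ℤ² there exists g ∈ G such that ρ(g)·v and v are ℤ-linearly independent; and (ii) the set {w₁(g) : g ∈ ker ρ} contains two ℤ-linearly independent vectors. Then the additive subgroup K = {(w₁(g), w₂(g)) : g ∈ ker ρ} of ℤ² × ℤ² spans a ℚ-subspace of ℚ⁴ of dimension exactly 2 or exactly 4. -/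
/-- The embedding of `ℤ²` into `ℚ²`. -/
def castQ (u : Fin 2 → ℤ) : Fin 2 → ℚ := fun i => (u i : ℚ)

lemma castQ_mulVec (A : Matrix (Fin 2) (Fin 2) ℤ) (v : Fin 2 → ℤ) :
    castQ (A.mulVec v) = (A.map ((↑) : ℤ → ℚ)).mulVec (castQ v) :=
  funext fun i => (Int.castRingHom ℚ).map_mulVec A v i

lemma rat_num_cast (q : ℚ) : (q.num : ℚ) = q * q.den := by
  have h := Rat.num_div_den q
  have hd : (q.den : ℚ) ≠ 0 := by exact_mod_cast q.den_ne_zero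
  rw [div_eq_iff hd] at h
  rw [h]

/-- `ℤ`-independence implies `ℚ`-independence of the rational casts. -/
lemma zindep_castQ {v w : Fin 2 → ℤ} (h : ZIndep v w) :
    LinearIndependent ℚ ![castQ v, castQ w] := by
  rw [LinearIndependent.pair_iff]
  intro s t hst
  have key : ∀ i, (s.num * t.den : ℤ) * v i + (t.num * s.den : ℤ) * w i = 0 := by
    intro i
    have hi : (s : ℚ) * (v i : ℚ) + (t : ℚ) * (w i : ℚ) = 0 := by
      have := congrFun hst i
      simpa [castQ, Pi.add_apply, Pi.smul_apply, smul_eq_mul] using this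
    have hq : ((s.num * t.den : ℤ) : ℚ) * (v i : ℚ) + ((t.num * s.den : ℤ) : ℚ) * (w i : ℚ)
        = 0 := by
      push_cast
      rw [rat_num_cast s, rat_num_cast t]
      linear_combination ((s.den : ℚ) * (t.den : ℚ)) * hi
    exact_mod_cast hq
  have hz : (s.num * t.den) • v + (t.num * s.den) • w = 0 := by
    funext i
    simpa [Pi.add_apply, Pi.smul_apply, smul_eq_mul] using key i
  obtain ⟨h1, h2⟩ := h _ _ hz
  have hsden : (s.den : ℤ) ≠ 0 := by exact_mod_cast s.den_ne_zero
  have htden : (t.den : ℤ) ≠ 0 := by exact_mod_cast t.den_ne_zero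
  constructor
  · have : s.num = 0 := by
      rcases mul_eq_zero.1 h1 with h | h
      · exact h
      · exact absurd h htden
    exact Rat.num_eq_zero.1 this
  · have : t.num = 0 := by
      rcases mul_eq_zero.1 h2 with h | h
      · exact h
      · exact absurd h hsden
    exact Rat.num_eq_zero.1 this

/-- Cocycles vanish at the identity. -/
lemma cocycle_one {G : Type*} [Group G] (ρ : G →* Matrix.SpecialLinearGroup (Fin 2) ℤ)
    (w : G → Fin 2 → ℤ)
    (hw : ∀ g h : G, w (g * h) = w g + (ρ g : Matrix (Fin 2) (Fin 2) ℤ).mulVec (w h)) :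
    w 1 = 0 := by
  have h := hw 1 1
  simp only [mul_one, map_one] at h
  have h1 : ((1 : Matrix.SpecialLinearGroup (Fin 2) ℤ) : Matrix (Fin 2) (Fin 2) ℤ) = 1 := rfl
  rw [h1, Matrix.one_mulVec] at h
  have h2 : w 1 + w 1 = w 1 + 0 := by rw [add_zero, ← h]
  exact (add_left_cancel h2)

/-- Conjugation by `g` acts on the cocycle values on the kernel by `ρ g`. -/
lemma cocycle_conj {G : Type*} [Group G] (ρ : G →* Matrix.SpecialLinearGroup (Fin 2) ℤ)
    (w : G → Fin 2 → ℤ)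
    (hw : ∀ g h : G, w (g * h) = w g + (ρ g : Matrix (Fin 2) (Fin 2) ℤ).mulVec (w h))
    (g h : G) (hh : h ∈ ρ.ker) :
    w (g * h * g⁻¹) = (ρ g : Matrix (Fin 2) (Fin 2) ℤ).mulVec (w h) := by
  have h1 : w 1 = 0 := cocycle_one ρ w hw
  have hinv : w g + (ρ g : Matrix (Fin 2) (Fin 2) ℤ).mulVec (w g⁻¹) = 0 := by
    rw [← hw g g⁻¹, mul_inv_cancel, h1]
  have hρh : ρ h = 1 := hh
  have e1 : w (g * h) = w g + (ρ g : Matrix (Fin 2) (Fin 2) ℤ).mulVec (w h) := hw g h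
  have e2 : w (g * h * g⁻¹)
      = w (g * h) + (ρ (g * h) : Matrix (Fin 2) (Fin 2) ℤ).mulVec (w g⁻¹) := hw (g * h) g⁻¹
  have e3 : (ρ (g * h) : Matrix (Fin 2) (Fin 2) ℤ) = (ρ g : Matrix (Fin 2) (Fin 2) ℤ) := by
    rw [map_mul, hρh, mul_one]
  rw [e2, e3, e1]
  have e4 : w g + (ρ g : Matrix (Fin 2) (Fin 2) ℤ).mulVec (w h)
      + (ρ g : Matrix (Fin 2) (Fin 2) ℤ).mulVec (w g⁻¹)
      = (ρ g : Matrix (Fin 2) (Fin 2) ℤ).mulVec (w h)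
      + (w g + (ρ g : Matrix (Fin 2) (Fin 2) ℤ).mulVec (w g⁻¹)) := by abel
  rw [e4, hinv, add_zero]

set_option maxHeartbeats 1000000 in
set_option synthInstance.maxHeartbeats 400000 in
/-- For a fibered square: if `ρ : G → SL₂(ℤ)` has irreducible-type image, `w₁, w₂` are
`ρ`-cocycles, and `w₁(ker ρ)` contains two independent vectors, then the group
`{(w₁(g), w₂(g)) : g ∈ ker ρ}` spans a `ℚ`-subspace of `ℚ⁴` of dimension `2` or `4`. -/
theorem relative_monodromy_rank_two_or_four_square
    {G : Type*} [Group G] (ρ : G →* Matrix.SpecialLinearGroup (Fin 2) ℤ)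
    (w₁ w₂ : G → Fin 2 → ℤ)
    (hw₁ : ∀ g h : G, w₁ (g * h) = w₁ g + (ρ g : Matrix (Fin 2) (Fin 2) ℤ).mulVec (w₁ h))
    (hw₂ : ∀ g h : G, w₂ (g * h) = w₂ g + (ρ g : Matrix (Fin 2) (Fin 2) ℤ).mulVec (w₂ h))
    (hirr : ∀ v : Fin 2 → ℤ, v ≠ 0 →
      ∃ g : G, ZIndep ((ρ g : Matrix (Fin 2) (Fin 2) ℤ).mulVec v) v)
    (hrk : ∃ g ∈ ρ.ker, ∃ g' ∈ ρ.ker, ZIndep (w₁ g) (w₁ g')) :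
    Module.finrank ℚ (Submodule.span ℚ
        {p : (Fin 2 → ℚ) × (Fin 2 → ℚ) | ∃ g ∈ ρ.ker, p = (castQ (w₁ g), castQ (w₂ g))}) = 2 ∨
    Module.finrank ℚ (Submodule.span ℚ
        {p : (Fin 2 → ℚ) × (Fin 2 → ℚ) | ∃ g ∈ ρ.ker, p = (castQ (w₁ g), castQ (w₂ g))}) = 4 := by
  classical
  set S : Set ((Fin 2 → ℚ) × (Fin 2 → ℚ)) :=
    {p | ∃ g ∈ ρ.ker, p = (castQ (w₁ g), castQ (w₂ g))} with hS
  set V : Submodule ℚ ((Fin 2 → ℚ) × (Fin 2 → ℚ)) := Submodule.span ℚ S with hV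
  set ρQ : G → Matrix (Fin 2) (Fin 2) ℚ :=
    fun g => ((ρ g : Matrix (Fin 2) (Fin 2) ℤ)).map ((↑) : ℤ → ℚ) with hρQ
  set T : G → ((Fin 2 → ℚ) × (Fin 2 → ℚ)) →ₗ[ℚ] ((Fin 2 → ℚ) × (Fin 2 → ℚ)) :=
    fun g => LinearMap.prodMap (ρQ g).mulVecLin (ρQ g).mulVecLin with hT
  -- S is invariant under T g
  have hS_inv : ∀ g : G, ∀ p ∈ S, T g p ∈ S := by
    rintro g p ⟨h, hh, rfl⟩
    refine ⟨g * h * g⁻¹, ?_, ?_⟩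
    · have hρh : ρ h = 1 := hh
      have : ρ (g * h * g⁻¹) = 1 := by simp [map_mul, hρh]
      exact this
    · have c1 := cocycle_conj ρ w₁ hw₁ g h hh
      have c2 := cocycle_conj ρ w₂ hw₂ g h hh
      simp only [hT, LinearMap.prodMap_apply, Matrix.mulVecLin_apply]
      rw [c1, c2, castQ_mulVec, castQ_mulVec]
  -- V is invariant under T g
  have hV_inv : ∀ g : G, ∀ x ∈ V, T g x ∈ V := by
    intro g x hx
    have hmap : Submodule.map (T g) V ≤ V := by
      rw [hV, Submodule.map_span]
      refine Submodule.span_le.2 ?_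
      rintro y ⟨p, hp, rfl⟩
      exact Submodule.subset_span (hS_inv g p hp)
    exact hmap ⟨x, hx, rfl⟩
  -- irreducibility over ℚ
  have hirrQ : ∀ W : Submodule ℚ (Fin 2 → ℚ),
      (∀ g : G, ∀ x ∈ W, (ρQ g).mulVec x ∈ W) → W = ⊥ ∨ W = ⊤ := by
    intro W hWinv
    by_cases hbot : W = ⊥
    · exact Or.inl hbot
    right
    obtain ⟨x, hxW, hx0⟩ := Submodule.exists_mem_ne_zero_of_ne_bot hbot
    set v : Fin 2 → ℤ := ![(x 0).num * (x 1).den, (x 1).num * (x 0).den] with hv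
    set c : ℚ := ((x 0).den : ℚ) * ((x 1).den : ℚ) with hc
    have hd0 : ((x 0).den : ℚ) ≠ 0 := by exact_mod_cast (x 0).den_ne_zero
    have hd1 : ((x 1).den : ℚ) ≠ 0 := by exact_mod_cast (x 1).den_ne_zero
    have hc0 : c ≠ 0 := mul_ne_zero hd0 hd1
    have hcast : castQ v = c • x := by
      funext i
      fin_cases i
      · show ((v 0 : ℤ) : ℚ) = c * x 0
        rw [hv, hc]
        simp only [Matrix.cons_val_zero]
        push_cast
        rw [rat_num_cast]
        ring
      · show ((v 1 : ℤ) : ℚ) = c * x 1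
        rw [hv, hc]
        simp only [Matrix.cons_val_one, Matrix.head_cons]
        push_cast
        rw [rat_num_cast]
        ring
    have hv0 : v ≠ 0 := by
      intro h0
      apply hx0
      have h00 : v 0 = 0 := by rw [h0]; rfl
      have h11 : v 1 = 0 := by rw [h0]; rfl
      rw [hv] at h00 h11
      simp only [Matrix.cons_val_zero] at h00
      simp only [Matrix.cons_val_one, Matrix.head_cons] at h11
      have hz1 : ((x 1).den : ℤ) ≠ 0 := by exact_mod_cast (x 1).den_ne_zero
      have hz0 : ((x 0).den : ℤ) ≠ 0 := by exact_mod_cast (x 0).den_ne_zero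
      have hx00 : x 0 = 0 := by
        refine Rat.num_eq_zero.1 ?_
        rcases mul_eq_zero.1 h00 with h | h
        · exact h
        · exact absurd h hz1
      have hx10 : x 1 = 0 := by
        refine Rat.num_eq_zero.1 ?_
        rcases mul_eq_zero.1 h11 with h | h
        · exact h
        · exact absurd h hz0
      funext i
      fin_cases i
      · exact hx00
      · exact hx10
    obtain ⟨g, hg⟩ := hirr v hv0
    have hli := zindep_castQ hg
    have h1 : castQ ((ρ g : Matrix (Fin 2) (Fin 2) ℤ).mulVec v) = c • (ρQ g).mulVec x := by
      rw [castQ_mulVec, hcast, Matrix.mulVec_smul]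
    set y : Fin 2 → ℚ := (ρQ g).mulVec x with hy
    have hyW : y ∈ W := hWinv g x hxW
    have hpair : LinearIndependent ℚ ![y, x] := by
      rw [LinearIndependent.pair_iff]
      intro s t hst
      refine LinearIndependent.pair_iff.1 hli s t ?_
      rw [h1, hcast, smul_comm s c, smul_comm t c, ← smul_add, hst, smul_zero]
    have hle : Submodule.span ℚ (Set.range ![y, x]) ≤ W := by
      rw [Submodule.span_le]
      rintro z ⟨i, rfl⟩
      fin_cases i
      · simpa using hyW
      · simpa using hxW
    have h2 : Module.finrank ℚ (Submodule.span ℚ (Set.range ![y, x])) = 2 := by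
      rw [finrank_span_eq_card hpair]
      simp
    have hge : 2 ≤ Module.finrank ℚ W := by
      have := Submodule.finrank_mono (t := W) hle
      rwa [h2] at this
    have hle2 : Module.finrank ℚ W ≤ 2 := by
      have := Submodule.finrank_le W
      simpa [Module.finrank_fin_fun] using this
    apply Submodule.eq_top_of_finrank_eq
    have h3 : Module.finrank ℚ W = 2 := le_antisymm hle2 hge
    simp [h3, Module.finrank_fin_fun]
  -- the vertical subspace
  set W₂ : Submodule ℚ (Fin 2 → ℚ) :=
    Submodule.comap (LinearMap.inr ℚ (Fin 2 → ℚ) (Fin 2 → ℚ)) V with hW₂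
  have hW₂inv : ∀ g : G, ∀ u ∈ W₂, (ρQ g).mulVec u ∈ W₂ := by
    intro g u hu
    have h0 : ((0 : Fin 2 → ℚ), u) ∈ V := by
      simpa [hW₂, Submodule.mem_comap, LinearMap.inr_apply] using hu
    have hTV := hV_inv g _ h0
    simp only [hT, LinearMap.prodMap_apply, Matrix.mulVecLin_apply, Matrix.mulVec_zero] at hTV
    simpa [hW₂, Submodule.mem_comap, LinearMap.inr_apply] using hTV
  -- the horizontal projection
  set P : Submodule ℚ (Fin 2 → ℚ) :=
    Submodule.map (LinearMap.fst ℚ (Fin 2 → ℚ) (Fin 2 → ℚ)) V with hP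
  obtain ⟨g, hg, g', hg', hind⟩ := hrk
  have hmem1 : (castQ (w₁ g), castQ (w₂ g)) ∈ V := Submodule.subset_span ⟨g, hg, rfl⟩
  have hmem2 : (castQ (w₁ g'), castQ (w₂ g')) ∈ V := Submodule.subset_span ⟨g', hg', rfl⟩
  have hP1 : castQ (w₁ g) ∈ P := ⟨_, hmem1, rfl⟩
  have hP2 : castQ (w₁ g') ∈ P := ⟨_, hmem2, rfl⟩
  have hliP := zindep_castQ hind
  have hPrank : Module.finrank ℚ P = 2 := by
    have hle : Submodule.span ℚ (Set.range ![castQ (w₁ g), castQ (w₁ g')]) ≤ P := by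
      rw [Submodule.span_le]
      rintro z ⟨i, rfl⟩
      fin_cases i
      · simpa using hP1
      · simpa using hP2
    have h2 : Module.finrank ℚ
        (Submodule.span ℚ (Set.range ![castQ (w₁ g), castQ (w₁ g')])) = 2 := by
      rw [finrank_span_eq_card hliP]
      simp
    have hge : 2 ≤ Module.finrank ℚ P := by
      have := Submodule.finrank_mono (t := P) hle
      rwa [h2] at this
    have hle2 : Module.finrank ℚ P ≤ 2 := by
      have := Submodule.finrank_le P
      simpa [Module.finrank_fin_fun] using this
    exact le_antisymm hle2 hge
  -- rank-nullity for the first projection restricted to V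
  set f : V →ₗ[ℚ] (Fin 2 → ℚ) :=
    (LinearMap.fst ℚ (Fin 2 → ℚ) (Fin 2 → ℚ)).comp V.subtype with hf
  have hrange : LinearMap.range f = P := by
    rw [hf, LinearMap.range_comp, Submodule.range_subtype]
  -- ker f ≃ W₂
  have hkerW : Module.finrank ℚ (LinearMap.ker f) = Module.finrank ℚ W₂ := by
    have hmemk : ∀ x : LinearMap.ker f, ((x : V) : (Fin 2 → ℚ) × (Fin 2 → ℚ)).2 ∈ W₂ := by
      intro x
      have hx1 : ((x : V) : (Fin 2 → ℚ) × (Fin 2 → ℚ)).1 = 0 := LinearMap.mem_ker.mp x.2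
      have hxV : ((x : V) : (Fin 2 → ℚ) × (Fin 2 → ℚ)) ∈ V := (x : V).2
      simp only [hW₂, Submodule.mem_comap, LinearMap.inr_apply]
      have hpe : ((0 : Fin 2 → ℚ), ((x : V) : (Fin 2 → ℚ) × (Fin 2 → ℚ)).2)
          = ((x : V) : (Fin 2 → ℚ) × (Fin 2 → ℚ)) := by
        rw [← hx1]
      rw [hpe]
      exact hxV
    have e : (LinearMap.ker f) ≃ₗ[ℚ] W₂ := by
      refine LinearEquiv.ofBijective
        { toFun := fun x => ⟨((x : V) : (Fin 2 → ℚ) × (Fin 2 → ℚ)).2, hmemk x⟩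
          map_add' := fun a b => rfl
          map_smul' := fun r a => rfl } ⟨?_, ?_⟩
      · -- injective
        intro a b hab
        have h2 : ((a : V) : (Fin 2 → ℚ) × (Fin 2 → ℚ)).2
            = ((b : V) : (Fin 2 → ℚ) × (Fin 2 → ℚ)).2 := congrArg Subtype.val hab
        have h1a : ((a : V) : (Fin 2 → ℚ) × (Fin 2 → ℚ)).1 = 0 := LinearMap.mem_ker.mp a.2
        have h1b : ((b : V) : (Fin 2 → ℚ) × (Fin 2 → ℚ)).1 = 0 := LinearMap.mem_ker.mp b.2
        apply Subtype.ext
        apply Subtype.ext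
        exact Prod.ext (by rw [h1a, h1b]) h2
      · -- surjective
        rintro ⟨u, hu⟩
        have huV : ((0 : Fin 2 → ℚ), u) ∈ V := by
          simpa [hW₂, Submodule.mem_comap, LinearMap.inr_apply] using hu
        refine ⟨⟨⟨((0 : Fin 2 → ℚ), u), huV⟩, ?_⟩, rfl⟩
        exact LinearMap.mem_ker.mpr rfl
    exact e.finrank_eq
  have hrn := LinearMap.finrank_range_add_finrank_ker f
  rw [hrange, hPrank, hkerW] at hrn
  rcases hirrQ W₂ hW₂inv with h | h
  · left
    have hz : Module.finrank ℚ W₂ = 0 := by rw [h]; exact finrank_bot ℚ _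
    rw [hz] at hrn
    omega
  · right
    have hz : Module.finrank ℚ W₂ = 2 := by
      rw [h]
      rw [finrank_top]
      simp [Module.finrank_fin_fun]
    rw [hz] at hrn
    omega
end

section
/- Let G be a group, ρ₁, ρ₂ : G → SL₂(ℤ) group homomorphisms, and w₁, w₂ : G → ℤ² maps such that wᵢ(gh) = wᵢ(g) + ρᵢ(g)·wᵢ(h) for all g, h ∈ G and i = 1, 2. Assume for i = 1, 2: (i) for every nonzero v ∈ ℤ² there exists g ∈ G such that ρᵢ(g)·v and v are ℤ-linearly independent; (ii) the set {wᵢ(g) : g ∈ ker ρᵢ} contains two ℤ-linearly independent vectors; and (iii) there exists g ∈ ker ρ₂ with ρ₁(g) ≠ 1 and there exists g' ∈ ker ρ₁ with ρ₂(g') ≠ 1. Then for each i = 1, 2 the set {wᵢ(g) : g ∈ ker ρ₁ ∩ ker ρ₂} contains two ℤ-linearly independent vectors; in particular the subgroup {(w₁(g), w₂(g)) : g ∈ ker ρ₁ ∩ ker ρ₂} of ℤ² × ℤ² is nontrivial. -/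
/-- key integer arithmetic lemma: trace of product of two nonzero nilpotents with
independent kernel vectors is nonzero. -/
lemma key_arith (p q r p' q' r' a b a' b' : ℤ)
    (h1 : p*a + q*b = 0) (h2 : r*a - p*b = 0)
    (h3 : p'*a' + q'*b' = 0) (h4 : r'*a' - p'*b' = 0)
    (hdet : p^2 + q*r = 0) (hdet' : p'^2 + q'*r' = 0)
    (hN : ¬(p = 0 ∧ q = 0 ∧ r = 0)) (hM : ¬(p' = 0 ∧ q' = 0 ∧ r' = 0))
    (hD : a*b' - b*a' ≠ 0) :
    2*p*p' + q*r' + r*q' ≠ 0 := by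
  intro hE
  have hD2 : (a*b' - b*a')^2 ≠ 0 := pow_ne_zero _ hD
  have I1 : r * r' * (a*b' - b*a')^2 = 0 := by
    linear_combination (r'*b*b'^2)*h1 + (r'*a*b'^2 - 2*r'*b*a'*b')*h2
      + (r*b^2*b')*h3 + (r*b^2*a' - 2*p*b^2*b')*h4 - (b^2*b'^2)*hE
  have I2 : r * q' * (a*b' - b*a')^2 = 0 := by
    linear_combination (b^2*a'^2)*hE - (r'*b*a'^2)*h1 - (-(q'*a*b'^2) + 2*q'*b*a'*b')*h2
      - (-(p*a*b*b') + 2*p*b^2*a')*h3 - (-(p*a*b*a'))*h4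
  have I3 : q * r' * (a*b' - b*a')^2 = 0 := by
    linear_combination (a^2*b'^2)*hE - (r*b'*a^2)*h3 - (-(q*a'*b^2) + 2*q*b'*a*b)*h4
      - (-(p'*a'*b'*b) + 2*p'*b'^2*a)*h1 - (-(p'*a'*b'*a))*h2
  have I4 : q * q' * (a*b' - b*a')^2 = 0 := by
    linear_combination (q'*a*a'^2)*h2 + (q'*b*a'^2 - 2*q'*a*b'*a')*h1
      + (q*a^2*a')*h4 + (q*a^2*b' + 2*p*a^2*a')*h3 - (a^2*a'^2)*hE
  have e1 : r * r' = 0 := by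
    rcases mul_eq_zero.mp I1 with h | h
    · exact h
    · exact absurd h hD2
  have e2 : r * q' = 0 := by
    rcases mul_eq_zero.mp I2 with h | h
    · exact h
    · exact absurd h hD2
  have e3 : q * r' = 0 := by
    rcases mul_eq_zero.mp I3 with h | h
    · exact h
    · exact absurd h hD2
  have e4 : q * q' = 0 := by
    rcases mul_eq_zero.mp I4 with h | h
    · exact h
    · exact absurd h hD2
  have hqr : ¬(q = 0 ∧ r = 0) := by
    rintro ⟨hq, hr⟩
    exact hN ⟨by nlinarith, hq, hr⟩
  have hqr' : ¬(q' = 0 ∧ r' = 0) := by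
    rintro ⟨hq, hr⟩
    exact hM ⟨by nlinarith, hq, hr⟩
  rcases mul_eq_zero.mp e1 with hr | hr'
  · have hq : q ≠ 0 := fun hq => hqr ⟨hq, hr⟩
    have hr'0 : r' = 0 := by
      rcases mul_eq_zero.mp e3 with h | h
      · exact absurd h hq
      · exact h
    have hq'0 : q' = 0 := by
      rcases mul_eq_zero.mp e4 with h | h
      · exact absurd h hq
      · exact h
    exact hqr' ⟨hq'0, hr'0⟩
  · have hq' : r' = 0 := hr'
    rcases mul_eq_zero.mp e2 with hr0 | hq'0
    · have hqne : q ≠ 0 := fun hq => hqr ⟨hq, hr0⟩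
      have hq'0 : q' = 0 := by
        rcases mul_eq_zero.mp e4 with h | h
        · exact absurd h hqne
        · exact h
      exact hqr' ⟨hq'0, hq'⟩
    · exact hqr' ⟨hq'0, hq'⟩


lemma mulVec_apply (A : Matrix (Fin 2) (Fin 2) ℤ) (v : Fin 2 → ℤ) (i : Fin 2) :
    A.mulVec v i = A i 0 * v 0 + A i 1 * v 1 := by
  simp [Matrix.mulVec, dotProduct, Fin.sum_univ_two]

lemma zindep_cross {u w : Fin 2 → ℤ} (h : ZIndep u w) : u 0 * w 1 - u 1 * w 0 ≠ 0 := by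
  intro hc
  obtain ⟨hw1, hu1⟩ := h (w 1) (-(u 1)) (by
    funext i
    fin_cases i <;> simp [smul_eq_mul] <;> linarith)
  have hu1' : u 1 = 0 := by linarith [neg_eq_zero.mp hu1]
  obtain ⟨hw0, hu0⟩ := h (w 0) (-(u 0)) (by
    funext i
    fin_cases i <;> simp [smul_eq_mul] <;> nlinarith)
  have hu0' : u 0 = 0 := by linarith [neg_eq_zero.mp hu0]
  have := (h 1 0 (by
    funext i
    fin_cases i <;> simp [smul_eq_mul] <;> omega)).1
  exact one_ne_zero this

lemma zindep_mulVec {X : Matrix (Fin 2) (Fin 2) ℤ} (hX : X.det ≠ 0)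
    {u w : Fin 2 → ℤ} (h : ZIndep u w) : ZIndep (X.mulVec u) (X.mulVec w) := by
  intro a b hab
  apply h a b
  have h0 : X.mulVec (a • u + b • w) = 0 := by
    rw [Matrix.mulVec_add, Matrix.mulVec_smul, Matrix.mulVec_smul]
    exact hab
  have h1 : X.det • (a • u + b • w) = 0 := by
    have h2 := congrArg (X.adjugate.mulVec) h0
    rwa [Matrix.mulVec_mulVec, Matrix.adjugate_mul, Matrix.smul_mulVec,
      Matrix.one_mulVec, Matrix.mulVec_zero] at h2
  exact (smul_eq_zero.mp h1).resolve_left hX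

lemma exists_ker_vec (p q r : ℤ) (hpqr : ¬(p = 0 ∧ q = 0 ∧ r = 0)) (hdet : p^2 + q*r = 0) :
    ∃ a b : ℤ, ¬(a = 0 ∧ b = 0) ∧ p*a + q*b = 0 ∧ r*a - p*b = 0 := by
  by_cases hq : q = 0 ∧ p = 0
  · refine ⟨0, -r, ?_, by rw [hq.1, hq.2]; ring, by rw [hq.2]; ring⟩
    rintro ⟨-, hr⟩
    exact hpqr ⟨hq.2, hq.1, by linarith [neg_eq_zero.mp hr]⟩
  · refine ⟨q, -p, ?_, by ring, by linarith [hdet]⟩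
    rintro ⟨hq0, hp0⟩
    exact hq ⟨hq0, by linarith [neg_eq_zero.mp hp0]⟩

lemma trace_two {X : Matrix (Fin 2) (Fin 2) ℤ} (hdet : X.det = 1)
    (h : ((1 : Matrix (Fin 2) (Fin 2) ℤ) - X).det = 0) :
    X 1 1 = 2 - X 0 0 := by
  rw [Matrix.det_fin_two] at hdet h
  simp only [Matrix.sub_apply, Matrix.one_apply_eq, Matrix.one_apply_ne (by decide : (0:Fin 2) ≠ 1),
    Matrix.one_apply_ne (by decide : (1:Fin 2) ≠ 0)] at h
  nlinarith [hdet, h]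


section Cocycle

variable {G : Type*} [Group G] (ρ : G →* Matrix.SpecialLinearGroup (Fin 2) ℤ)
  (w : G → Fin 2 → ℤ)
  (hw : ∀ g h : G, w (g * h) = w g + (ρ g : Matrix (Fin 2) (Fin 2) ℤ).mulVec (w h))

include hw

lemma coc_one : w 1 = 0 := by
  have h := hw 1 1
  rw [one_mul, map_one, Matrix.SpecialLinearGroup.coe_one, Matrix.one_mulVec] at h
  have h2 : w 1 + 0 = w 1 + w 1 := by rw [add_zero]; exact h
  exact (add_left_cancel h2).symm

lemma coc_inv (b : G) :
    (ρ b : Matrix (Fin 2) (Fin 2) ℤ).mulVec (w b⁻¹) = -(w b) := by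
  have h := hw b b⁻¹
  rw [mul_inv_cancel, coc_one ρ w hw] at h
  exact eq_neg_of_add_eq_zero_right h.symm

lemma coc_inv_ker {a : G} (ha : ρ a = 1) : w a⁻¹ = -(w a) := by
  have h := coc_inv ρ w hw a
  rwa [ha, Matrix.SpecialLinearGroup.coe_one, Matrix.one_mulVec] at h

lemma coc_comm {a : G} (ha : ρ a = 1) (b : G) :
    w (a * b * a⁻¹ * b⁻¹) =
      ((1 : Matrix (Fin 2) (Fin 2) ℤ) - (ρ b : Matrix (Fin 2) (Fin 2) ℤ)).mulVec (w a) := by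
  have hha : (ρ a : Matrix (Fin 2) (Fin 2) ℤ) = 1 := by
    rw [ha, Matrix.SpecialLinearGroup.coe_one]
  have hha' : (ρ a⁻¹ : Matrix (Fin 2) (Fin 2) ℤ) = 1 := by
    rw [map_inv, ha, inv_one, Matrix.SpecialLinearGroup.coe_one]
  have e1 : w (a * b) = w a + w b := by
    rw [hw a b, hha, Matrix.one_mulVec]
  have e2 : w (a * b * a⁻¹) = w a + w b + (ρ b : Matrix (Fin 2) (Fin 2) ℤ).mulVec (-(w a)) := by
    rw [hw (a*b) a⁻¹, e1, coc_inv_ker ρ w hw ha, map_mul, ha, one_mul]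
  have e3 : w (a * b * a⁻¹ * b⁻¹) = w (a * b * a⁻¹)
      + (ρ (a * b * a⁻¹) : Matrix (Fin 2) (Fin 2) ℤ).mulVec (w b⁻¹) := hw _ _
  have hrab : ρ (a * b * a⁻¹) = ρ b := by
    rw [map_mul, map_mul, ha, map_inv, ha, one_mul, inv_one, mul_one]
  rw [e3, hrab, e2, coc_inv ρ w hw b, Matrix.sub_mulVec, Matrix.one_mulVec,
    Matrix.mulVec_neg]
  abel
  
end Cocycle


lemma sl_ne_one {A : Matrix.SpecialLinearGroup (Fin 2) ℤ} (hA : A ≠ 1)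
    (htr : (A : Matrix (Fin 2) (Fin 2) ℤ) 1 1 = 2 - (A : Matrix (Fin 2) (Fin 2) ℤ) 0 0) :
    ¬((A : Matrix (Fin 2) (Fin 2) ℤ) 0 0 - 1 = 0 ∧ (A : Matrix (Fin 2) (Fin 2) ℤ) 0 1 = 0 ∧
      (A : Matrix (Fin 2) (Fin 2) ℤ) 1 0 = 0) := by
  rintro ⟨n1, n2, n3⟩
  apply hA
  apply Subtype.ext
  rw [Matrix.SpecialLinearGroup.coe_one]
  ext i j
  fin_cases i <;> fin_cases j <;> simp [Matrix.one_apply] <;> omega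

lemma exists_nondeg {G : Type*} [Group G] (ρ₁ ρ₂ : G →* Matrix.SpecialLinearGroup (Fin 2) ℤ)
    (hirr₁ : ∀ v : Fin 2 → ℤ, v ≠ 0 →
      ∃ g : G, ZIndep ((ρ₁ g : Matrix (Fin 2) (Fin 2) ℤ).mulVec v) v)
    (hne₁ : ∃ g ∈ ρ₂.ker, ρ₁ g ≠ 1) :
    ∃ b ∈ ρ₂.ker, ((1 : Matrix (Fin 2) (Fin 2) ℤ) - (ρ₁ b : Matrix (Fin 2) (Fin 2) ℤ)).det ≠ 0 := by
  by_contra hcon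
  push_neg at hcon
  obtain ⟨b₀, hb₀, hB⟩ := hne₁
  set Bm : Matrix (Fin 2) (Fin 2) ℤ := ((ρ₁ b₀ : Matrix.SpecialLinearGroup (Fin 2) ℤ) :
    Matrix (Fin 2) (Fin 2) ℤ) with hBmdef
  have detB : Bm.det = 1 := (ρ₁ b₀).prop
  have hB11 : Bm 1 1 = 2 - Bm 0 0 := trace_two detB (hcon b₀ hb₀)
  have detBf : Bm 0 0 * Bm 1 1 - Bm 0 1 * Bm 1 0 = 1 := by
    rw [← Matrix.det_fin_two]; exact detB
  have hdetN : (Bm 0 0 - 1)^2 + Bm 0 1 * Bm 1 0 = 0 := by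
    linear_combination Bm 0 0 * hB11 - detBf
  have hN : ¬(Bm 0 0 - 1 = 0 ∧ Bm 0 1 = 0 ∧ Bm 1 0 = 0) := sl_ne_one hB hB11
  obtain ⟨va, vb, hvab, hk1, hk2⟩ := exists_ker_vec (Bm 0 0 - 1) (Bm 0 1) (Bm 1 0) hN hdetN
  set v : Fin 2 → ℤ := ![va, vb] with hvdef
  have hv0 : v 0 = va := rfl
  have hv1 : v 1 = vb := rfl
  have hvne : v ≠ 0 := by
    intro h0
    exact hvab ⟨by rw [← hv0, h0]; rfl, by rw [← hv1, h0]; rfl⟩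
  obtain ⟨g, hg⟩ := hirr₁ v hvne
  set Gm : Matrix (Fin 2) (Fin 2) ℤ := ((ρ₁ g : Matrix.SpecialLinearGroup (Fin 2) ℤ) :
    Matrix (Fin 2) (Fin 2) ℤ) with hGmdef
  set v' : Fin 2 → ℤ := Gm.mulVec v with hv'def
  have hD : v 0 * v' 1 - v 1 * v' 0 ≠ 0 := by
    have h := zindep_cross hg
    intro h0; apply h; linarith
  set b₁ := g * b₀ * g⁻¹ with hb₁def
  have hb₁ : b₁ ∈ ρ₂.ker := by
    rw [MonoidHom.mem_ker, hb₁def, map_mul, map_mul, map_inv,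
      MonoidHom.mem_ker.mp hb₀, mul_one, mul_inv_cancel]
  set Cm : Matrix (Fin 2) (Fin 2) ℤ := ((ρ₁ b₁ : Matrix.SpecialLinearGroup (Fin 2) ℤ) :
    Matrix (Fin 2) (Fin 2) ℤ) with hCmdef
  have detC : Cm.det = 1 := (ρ₁ b₁).prop
  have hC11 : Cm 1 1 = 2 - Cm 0 0 := trace_two detC (hcon b₁ hb₁)
  have detCf : Cm 0 0 * Cm 1 1 - Cm 0 1 * Cm 1 0 = 1 := by
    rw [← Matrix.det_fin_two]; exact detC
  have hdetM : (Cm 0 0 - 1)^2 + Cm 0 1 * Cm 1 0 = 0 := by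
    linear_combination Cm 0 0 * hC11 - detCf
  have hCne : ρ₁ b₁ ≠ 1 := by
    intro h
    apply hB
    have h2 : ρ₁ b₀ = (ρ₁ g)⁻¹ * (ρ₁ b₁) * (ρ₁ g) := by
      rw [hb₁def, map_mul, map_mul, map_inv]; group
    rw [h2, h, mul_one, inv_mul_cancel]
  have hM : ¬(Cm 0 0 - 1 = 0 ∧ Cm 0 1 = 0 ∧ Cm 1 0 = 0) := sl_ne_one hCne hC11
  -- Bm fixes v
  have Bv : Bm.mulVec v = v := by
    funext i
    rw [mulVec_apply, hv0, hv1]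
    fin_cases i
    · show Bm 0 0 * va + Bm 0 1 * vb = va
      linear_combination hk1
    · show Bm 1 0 * va + Bm 1 1 * vb = vb
      linear_combination hk2 + vb * hB11
  -- Cm fixes v'
  have coeC : Cm = Gm * Bm * ((ρ₁ g⁻¹ : Matrix.SpecialLinearGroup (Fin 2) ℤ) :
      Matrix (Fin 2) (Fin 2) ℤ) := by
    rw [hCmdef, hb₁def, map_mul, map_mul]
    rfl
  have G'G : ((ρ₁ g⁻¹ : Matrix.SpecialLinearGroup (Fin 2) ℤ) :
      Matrix (Fin 2) (Fin 2) ℤ) * Gm = 1 := by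
    rw [hGmdef, ← Matrix.SpecialLinearGroup.coe_mul, ← map_mul, inv_mul_cancel, map_one,
      Matrix.SpecialLinearGroup.coe_one]
  have Cv' : Cm.mulVec v' = v' := by
    rw [hv'def, Matrix.mulVec_mulVec, coeC, mul_assoc, G'G, mul_one,
      ← Matrix.mulVec_mulVec, Bv]
  have h3' : (Cm 0 0 - 1) * v' 0 + Cm 0 1 * v' 1 = 0 := by
    have := congrFun Cv' 0
    rw [mulVec_apply] at this
    linear_combination this
  have h4' : Cm 1 0 * v' 0 - (Cm 0 0 - 1) * v' 1 = 0 := by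
    have := congrFun Cv' 1
    rw [mulVec_apply] at this
    linear_combination this - v' 1 * hC11
  have h1' : (Bm 0 0 - 1) * v 0 + Bm 0 1 * v 1 = 0 := by
    rw [hv0, hv1]; exact hk1
  have h2' : Bm 1 0 * v 0 - (Bm 0 0 - 1) * v 1 = 0 := by
    rw [hv0, hv1]; exact hk2
  -- the trace of the product
  have hbb : b₀ * b₁ ∈ ρ₂.ker := mul_mem hb₀ hb₁
  have coeBC : ((ρ₁ (b₀ * b₁) : Matrix.SpecialLinearGroup (Fin 2) ℤ) :
      Matrix (Fin 2) (Fin 2) ℤ) = Bm * Cm := by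
    rw [map_mul]; rfl
  have detBC : (Bm * Cm).det = 1 := by
    rw [Matrix.det_mul, detB, detC, mul_one]
  have htr : (Bm * Cm) 1 1 = 2 - (Bm * Cm) 0 0 := by
    apply trace_two detBC
    have := hcon (b₀ * b₁) hbb
    rwa [coeBC] at this
  have h00 : (Bm * Cm) 0 0 = Bm 0 0 * Cm 0 0 + Bm 0 1 * Cm 1 0 := by
    simp [Matrix.mul_apply, Fin.sum_univ_two]
  have h11 : (Bm * Cm) 1 1 = Bm 1 0 * Cm 0 1 + Bm 1 1 * Cm 1 1 := by
    simp [Matrix.mul_apply, Fin.sum_univ_two]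
  have key0 : Bm 0 0 * Cm 0 0 + Bm 0 1 * Cm 1 0 + (Bm 1 0 * Cm 0 1 + Bm 1 1 * Cm 1 1) = 2 := by
    rw [h00, h11] at htr
    linarith
  have hE : 2*(Bm 0 0 - 1)*(Cm 0 0 - 1) + Bm 0 1 * Cm 1 0 + Bm 1 0 * Cm 0 1 = 0 := by
    linear_combination key0 - Cm 1 1 * hB11 - (2 - Bm 0 0) * hC11
  exact key_arith (Bm 0 0 - 1) (Bm 0 1) (Bm 1 0) (Cm 0 0 - 1) (Cm 0 1) (Cm 1 0)
    (v 0) (v 1) (v' 0) (v' 1) h1' h2' h3' h4' hdetN hdetM hN hM hD hE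

lemma comm_mem_ker {G : Type*} [Group G] (ρ : G →* Matrix.SpecialLinearGroup (Fin 2) ℤ)
    {a b : G} (h : ρ a = 1 ∨ ρ b = 1) : a * b * a⁻¹ * b⁻¹ ∈ ρ.ker := by
  rw [MonoidHom.mem_ker]
  simp only [map_mul, map_inv]
  rcases h with h | h <;> rw [h] <;> group

lemma half_result {G : Type*} [Group G] (ρ₁ ρ₂ : G →* Matrix.SpecialLinearGroup (Fin 2) ℤ)
    (w₁ : G → Fin 2 → ℤ)
    (hw₁ : ∀ g h : G, w₁ (g * h) = w₁ g + (ρ₁ g : Matrix (Fin 2) (Fin 2) ℤ).mulVec (w₁ h))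
    (hirr₁ : ∀ v : Fin 2 → ℤ, v ≠ 0 →
      ∃ g : G, ZIndep ((ρ₁ g : Matrix (Fin 2) (Fin 2) ℤ).mulVec v) v)
    (hrk₁ : ∃ g ∈ ρ₁.ker, ∃ g' ∈ ρ₁.ker, ZIndep (w₁ g) (w₁ g'))
    (hne₁ : ∃ g ∈ ρ₂.ker, ρ₁ g ≠ 1) :
    ∃ g, (g ∈ ρ₁.ker ∧ g ∈ ρ₂.ker) ∧ ∃ g', (g' ∈ ρ₁.ker ∧ g' ∈ ρ₂.ker) ∧
      ZIndep (w₁ g) (w₁ g') := by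
  obtain ⟨b, hb2, hbdet⟩ := exists_nondeg ρ₁ ρ₂ hirr₁ hne₁
  obtain ⟨a, ha, a', ha', hind⟩ := hrk₁
  have hb2' := MonoidHom.mem_ker.mp hb2
  have ha1 := MonoidHom.mem_ker.mp ha
  have ha1' := MonoidHom.mem_ker.mp ha'
  refine ⟨a * b * a⁻¹ * b⁻¹, ⟨comm_mem_ker ρ₁ (Or.inl ha1), comm_mem_ker ρ₂ (Or.inr hb2')⟩,
    a' * b * a'⁻¹ * b⁻¹, ⟨comm_mem_ker ρ₁ (Or.inl ha1'), comm_mem_ker ρ₂ (Or.inr hb2')⟩, ?_⟩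
  rw [coc_comm ρ₁ w₁ hw₁ ha1 b, coc_comm ρ₁ w₁ hw₁ ha1' b]
  exact zindep_mulVec hbdet hind

/-- For a product of two non-isogenous elliptic schemes with both sections non-torsion:
under the irreducibility, rank-two, and non-conjugacy hypotheses, each restricted cocycle
`wᵢ` on `ker ρ₁ ∩ ker ρ₂` still contains two `ℤ`-linearly independent vectors; in
particular the joint group is nontrivial. -/
theorem restricted_cocycles_rank_two_on_joint_kernel
    {G : Type*} [Group G] (ρ₁ ρ₂ : G →* Matrix.SpecialLinearGroup (Fin 2) ℤ)
    (w₁ w₂ : G → Fin 2 → ℤ)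
    (hw₁ : ∀ g h : G, w₁ (g * h) = w₁ g + (ρ₁ g : Matrix (Fin 2) (Fin 2) ℤ).mulVec (w₁ h))
    (hw₂ : ∀ g h : G, w₂ (g * h) = w₂ g + (ρ₂ g : Matrix (Fin 2) (Fin 2) ℤ).mulVec (w₂ h))
    (hirr₁ : ∀ v : Fin 2 → ℤ, v ≠ 0 →
      ∃ g : G, ZIndep ((ρ₁ g : Matrix (Fin 2) (Fin 2) ℤ).mulVec v) v)
    (hirr₂ : ∀ v : Fin 2 → ℤ, v ≠ 0 →
      ∃ g : G, ZIndep ((ρ₂ g : Matrix (Fin 2) (Fin 2) ℤ).mulVec v) v)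
    (hrk₁ : ∃ g ∈ ρ₁.ker, ∃ g' ∈ ρ₁.ker, ZIndep (w₁ g) (w₁ g'))
    (hrk₂ : ∃ g ∈ ρ₂.ker, ∃ g' ∈ ρ₂.ker, ZIndep (w₂ g) (w₂ g'))
    (hne₁ : ∃ g ∈ ρ₂.ker, ρ₁ g ≠ 1) (hne₂ : ∃ g' ∈ ρ₁.ker, ρ₂ g' ≠ 1) :
    (∃ g, (g ∈ ρ₁.ker ∧ g ∈ ρ₂.ker) ∧ ∃ g', (g' ∈ ρ₁.ker ∧ g' ∈ ρ₂.ker) ∧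
      ZIndep (w₁ g) (w₁ g')) ∧
    (∃ g, (g ∈ ρ₁.ker ∧ g ∈ ρ₂.ker) ∧ ∃ g', (g' ∈ ρ₁.ker ∧ g' ∈ ρ₂.ker) ∧
      ZIndep (w₂ g) (w₂ g')) ∧
    (∃ g, (g ∈ ρ₁.ker ∧ g ∈ ρ₂.ker) ∧ (w₁ g, w₂ g) ≠ 0) := by
  have H1 := half_result ρ₁ ρ₂ w₁ hw₁ hirr₁ hrk₁ hne₁
  have H2 := half_result ρ₂ ρ₁ w₂ hw₂ hirr₂ hrk₂ hne₂
  refine ⟨H1, ?_, ?_⟩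
  · obtain ⟨g, ⟨h2, h1⟩, g', ⟨h2', h1'⟩, hz⟩ := H2
    exact ⟨g, ⟨h1, h2⟩, g', ⟨h1', h2'⟩, hz⟩
  · obtain ⟨g, hmem, g', hmem', hz⟩ := H1
    refine ⟨g, hmem, ?_⟩
    intro h0
    have hw0 : w₁ g = 0 := congrArg Prod.fst h0
    have h10 := (hz 1 0 (by rw [hw0]; simp)).1
    exact one_ne_zero h10
end
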